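/- Under the error dynamics e(t+1) = A_cl e(t) with A_cl = [[A−BK, LC],[0, A−LC]], if there exists a positive semidefinite Q with e(0) e(0)ᵀ ⪯ Q and A_cl Q A_clᵀ ⪯ Q, then for all t ≥ 0 and for the output difference z(t) − z̄(t) = [H H] e(t), we have ‖z(t) − z̄(t)‖ ≤ ε where ε = sqrt(trace([H H] Q [H H]ᵀ)). -/

import Mathlib

open Matrix

/-- Loewner order: `A ⪯ B` iff `B - A` is positive semidefinite. -/
def LoewnerLE {N : Type*} [Fintype N] (A B : Matrix N N ℝ) : Prop := (B - A).PosSemidef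

/-!
The set `{e | e eᵀ ⪯ Q}` is invariant under `e ↦ A e` as soon as `A Q Aᵀ ⪯ Q`, because congruence
by `A` preserves the Loewner order: `A e eᵀ Aᵀ ⪯ A Q Aᵀ ⪯ Q`. Hence every `e(t)` satisfies
`e(t) e(t)ᵀ ⪯ Q`, and then `‖M e(t)‖² = tr (M e(t) e(t)ᵀ Mᵀ) ≤ tr (M Q Mᵀ)`.
-/

namespace LoewnerLE

variable {N m : Type*} [Fintype N] [Fintype m]

theorem trans {A B C : Matrix N N ℝ} (hAB : LoewnerLE A B) (hBC : LoewnerLE B C) :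
    LoewnerLE A C := by
  simpa only [LoewnerLE, sub_add_sub_cancel] using hBC.add hAB

theorem mul_mul_transpose {A B : Matrix N N ℝ} (h : LoewnerLE A B) (C : Matrix m N ℝ) :
    LoewnerLE (C * A * Cᵀ) (C * B * Cᵀ) := by
  simpa only [LoewnerLE, conjTranspose_eq_transpose_of_trivial, Matrix.mul_sub, Matrix.sub_mul]
    using h.mul_mul_conjTranspose_same C

theorem trace_le {A B : Matrix N N ℝ} (h : LoewnerLE A B) : A.trace ≤ B.trace := by
  simpa only [trace_sub, sub_nonneg] using h.trace_nonneg

end LoewnerLE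

section

variable {N m : Type*} [Fintype N]

theorem vecMulVec_mulVec_self (A : Matrix m N ℝ) (x : N → ℝ) :
    vecMulVec (A *ᵥ x) (A *ᵥ x) = A * vecMulVec x x * Aᵀ := by
  rw [mul_vecMulVec, vecMulVec_mul, vecMul_transpose]

theorem sum_sq_eq_trace_vecMulVec [Fintype m] (v : m → ℝ) :
    ∑ i, v i ^ 2 = (vecMulVec v v).trace := by
  simp only [trace_vecMulVec, dotProduct, sq]

theorem vecMulVec_pow_mulVec_le [DecidableEq N] {A Q : Matrix N N ℝ} {x : N → ℝ}
    (hx : LoewnerLE (vecMulVec x x) Q) (hA : LoewnerLE (A * Q * Aᵀ) Q) (t : ℕ) :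
    LoewnerLE (vecMulVec ((A ^ t) *ᵥ x) ((A ^ t) *ᵥ x)) Q := by
  induction t with
  | zero => simpa only [pow_zero, one_mulVec] using hx
  | succ t ih =>
    rw [pow_succ', ← mulVec_mulVec, vecMulVec_mulVec_self]
    exact (ih.mul_mul_transpose A).trans hA

theorem sum_sq_mulVec_le_trace [Fintype m] {Q : Matrix N N ℝ} {x : N → ℝ}
    (hx : LoewnerLE (vecMulVec x x) Q) (M : Matrix m N ℝ) :
    ∑ i, (M *ᵥ x) i ^ 2 ≤ (M * Q * Mᵀ).trace := by
  rw [sum_sq_eq_trace_vecMulVec, vecMulVec_mulVec_self]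
  exact (hx.mul_mul_transpose M).trace_le

end

theorem interface_accuracy_general (n q : ℕ)
    (Acl Q : Matrix (Fin n ⊕ Fin n) (Fin n ⊕ Fin n) ℝ)
    (M : Matrix (Fin q) (Fin n ⊕ Fin n) ℝ)
    (e0 : Fin n ⊕ Fin n → ℝ)
    (hInit : LoewnerLE (Matrix.vecMulVec e0 e0) Q)
    (hLyap : LoewnerLE (Acl * Q * Aclᵀ) Q)
    (e : ℕ → (Fin n ⊕ Fin n → ℝ)) (he : ∀ t, e t = (Acl ^ t).mulVec e0) :
    ∀ t, Real.sqrt (∑ i, (M.mulVec (e t)) i ^ 2) ≤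
      Real.sqrt (Matrix.trace (M * Q * Mᵀ)) := by
  intro t
  rw [he t]
  exact Real.sqrt_le_sqrt (sum_sq_mulVec_le_trace (vecMulVec_pow_mulVec_le hInit hLyap t) M)

theorem interface_accuracy (n q : ℕ)
    (Acl Q : Matrix (Fin n ⊕ Fin n) (Fin n ⊕ Fin n) ℝ)
    (H : Matrix (Fin q) (Fin n) ℝ)
    (M : Matrix (Fin q) (Fin n ⊕ Fin n) ℝ) (hM : M = Matrix.fromCols H H)
    (hQ : Q.PosSemidef)
    (e0 : Fin n ⊕ Fin n → ℝ)
    (hInit : LoewnerLE (Matrix.vecMulVec e0 e0) Q)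
    (hLyap : LoewnerLE (Acl * Q * Aclᵀ) Q)
    (e : ℕ → (Fin n ⊕ Fin n → ℝ)) (he : ∀ t, e t = (Acl ^ t).mulVec e0) :
    ∀ t, Real.sqrt (∑ i, (M.mulVec (e t)) i ^ 2) ≤
      Real.sqrt (Matrix.trace (M * Q * Mᵀ)) :=
  interface_accuracy_general n q Acl Q M e0 hInit hLyap e he
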